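/- arXiv:1811.01543 — 2 statements merged into one kernel-verified Lean document; each statement's English description precedes it below -/
import Mathlib

section
/- Let X be a Hilbert space, G a bounded self-adjoint positive semidefinite operator with square root G^{1/2}, v ∈ X, α > 0. Define J(ψ) = ½‖G^{1/2}ψ‖² − ⟨ψ, v⟩ + α‖ψ‖ and μ = sup{ (⟨ψ,v⟩ − α‖ψ‖)/‖G^{1/2}ψ‖ : ψ ∈ X, G^{1/2}ψ ≠ 0, ⟨ψ,v⟩ − α‖ψ‖ > 0 } ∪ {0} (taking μ = +∞ if there exists ψ with G^{1/2}ψ = 0 and ⟨ψ,v⟩ − α‖ψ‖ > 0). Then −inf_{ψ∈X} J(ψ) = ½ μ² (with the convention that both sides are +∞ simultaneously). -/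
/-!
Both `‖G^{1/2} ψ‖` and `c(ψ) = ⟪ψ, v⟫ - α ‖ψ‖` are positively homogeneous in `ψ`, so along a
ray `t ↦ t • ψ` (`t ≥ 0`) the functional is the quadratic `t ↦ ½ t² ‖G^{1/2} ψ‖² - t c(ψ)`.
If `G^{1/2} ψ = 0` and `c(ψ) > 0` it is unbounded below; if `G^{1/2} ψ ≠ 0` and `c(ψ) > 0` its
minimum is `-½ (c(ψ) / ‖G^{1/2} ψ‖)²`; otherwise it is `≥ 0`. Hence `inf J = -½ sup q²` over the
observability ratios `q`, which is `-½ μ²`.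
-/

open scoped RealInnerProductSpace

open Set

lemma sq_csSup_le_of_forall_sq_le {S : Set ℝ} (hne : S.Nonempty) (hnonneg : ∀ q ∈ S, 0 ≤ q)
    {B : ℝ} (hB : ∀ q ∈ S, q ^ 2 ≤ B) : sSup S ^ 2 ≤ B := by
  obtain ⟨q₀, hq₀⟩ := hne
  have hB0 : 0 ≤ B := (sq_nonneg q₀).trans (hB q₀ hq₀)
  refine (Real.le_sqrt (Real.sSup_nonneg hnonneg) hB0).1 (csSup_le ⟨q₀, hq₀⟩ fun q hq => ?_)
  exact (Real.le_sqrt (hnonneg q hq) hB0).2 (hB q hq)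

def PosHomogeneous {X : Type*} [SMul ℝ X] (f : X → ℝ) : Prop :=
  ∀ t : ℝ, 0 ≤ t → ∀ ψ, f (t • ψ) = t * f ψ

section

variable {X : Type*}

noncomputable def dualObjective (a c : X → ℝ) (ψ : X) : ℝ := 1 / 2 * a ψ ^ 2 - c ψ

def ratios (a c : X → ℝ) : Set ℝ := {q | q = 0 ∨ ∃ ψ, a ψ ≠ 0 ∧ 0 < c ψ ∧ q = c ψ / a ψ}

variable {a c : X → ℝ}

lemma zero_mem_ratios : (0 : ℝ) ∈ ratios a c := Or.inl rfl

lemma nonneg_of_mem_ratios (ha : ∀ ψ, 0 ≤ a ψ) {q : ℝ} (hq : q ∈ ratios a c) : 0 ≤ q := by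
  rcases hq with rfl | ⟨ψ, hψ, hc, rfl⟩
  exacts [le_rfl, (div_pos hc ((ha ψ).lt_of_ne' hψ)).le]

lemma neg_half_sq_le_dualObjective (ha₀ : ∀ ψ, 0 ≤ a ψ) (hno : ¬∃ ψ, a ψ = 0 ∧ 0 < c ψ)
    {M : ℝ} (hM : M ∈ upperBounds (ratios a c)) (ψ : X) :
    -(1 / 2 * M ^ 2) ≤ dualObjective a c ψ := by
  have hcM : c ψ ≤ M * a ψ := by
    rcases le_or_gt (c ψ) 0 with hcψ | hcψ
    · exact hcψ.trans (mul_nonneg (hM zero_mem_ratios) (ha₀ ψ))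
    have haψ : 0 < a ψ := (ha₀ ψ).lt_of_ne' fun h => hno ⟨ψ, h, hcψ⟩
    exact (div_le_iff₀ haψ).1 (hM (Or.inr ⟨ψ, haψ.ne', hcψ, rfl⟩))
  rw [dualObjective]
  nlinarith [sq_nonneg (a ψ - M)]

variable [AddCommGroup X] [Module ℝ X]

lemma PosHomogeneous.map_zero {f : X → ℝ} (hf : PosHomogeneous f) : f 0 = 0 := by
  simpa using hf 0 le_rfl 0

lemma dualObjective_smul (ha : PosHomogeneous a) (hc : PosHomogeneous c) {t : ℝ} (ht : 0 ≤ t)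
    (ψ : X) : dualObjective a c (t • ψ) = 1 / 2 * t ^ 2 * a ψ ^ 2 - t * c ψ := by
  rw [dualObjective, ha t ht, hc t ht]
  ring

lemma exists_dualObjective_eq_of_mem_ratios (ha : PosHomogeneous a) (hc : PosHomogeneous c)
    {q : ℝ} (hq : q ∈ ratios a c) : ∃ ψ, dualObjective a c ψ = -(1 / 2 * q ^ 2) := by
  rcases hq with rfl | ⟨ψ, hψ, hcψ, rfl⟩
  · exact ⟨0, by simp [dualObjective, ha.map_zero, hc.map_zero]⟩
  · -- the minimiser of the quadratic on the ray through `ψ`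
    refine ⟨(c ψ / a ψ ^ 2) • ψ, ?_⟩
    rw [dualObjective_smul ha hc (by positivity)]
    field_simp
    ring

lemma not_bddBelow_dualObjective (ha : PosHomogeneous a) (hc : PosHomogeneous c) {ψ : X}
    (hψ : a ψ = 0) (hcψ : 0 < c ψ) : ¬ BddBelow (range (dualObjective a c)) := by
  rintro ⟨m, hm⟩
  have h := hm (mem_range_self (((|m| + 1) / c ψ) • ψ))
  rw [dualObjective_smul ha hc (by positivity), hψ, div_mul_cancel₀ _ hcψ.ne'] at h
  norm_num at h
  linarith [neg_abs_le m]

lemma bddBelow_dualObjective_iff (ha₀ : ∀ ψ, 0 ≤ a ψ) (ha : PosHomogeneous a)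
    (hc : PosHomogeneous c) :
    BddBelow (range (dualObjective a c)) ↔
      (¬∃ ψ, a ψ = 0 ∧ 0 < c ψ) ∧ BddAbove (ratios a c) := by
  constructor
  · intro hbdd
    refine ⟨fun ⟨ψ, hψ, hcψ⟩ => not_bddBelow_dualObjective ha hc hψ hcψ hbdd, ?_⟩
    obtain ⟨m, hm⟩ := hbdd
    refine ⟨√(-(2 * m)), fun q hq => ?_⟩
    obtain ⟨ψ, hψ⟩ := exists_dualObjective_eq_of_mem_ratios ha hc hq
    have hmψ := hm (mem_range_self ψ)
    rw [hψ] at hmψ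
    exact Real.le_sqrt_of_sq_le (by linarith)
  · rintro ⟨hno, hbdd⟩
    exact ⟨_, forall_mem_range.2
      (neg_half_sq_le_dualObjective ha₀ hno fun _ hq => le_csSup hbdd hq)⟩

lemma isGLB_dualObjective (ha₀ : ∀ ψ, 0 ≤ a ψ) (ha : PosHomogeneous a) (hc : PosHomogeneous c)
    (hbdd : BddBelow (range (dualObjective a c))) :
    IsGLB (range (dualObjective a c)) (-(1 / 2 * sSup (ratios a c) ^ 2)) := by
  obtain ⟨hno, hbddS⟩ := (bddBelow_dualObjective_iff ha₀ ha hc).1 hbdd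
  refine ⟨forall_mem_range.2
    (neg_half_sq_le_dualObjective ha₀ hno fun _ hq => le_csSup hbddS hq), fun m hm => ?_⟩
  have hμ : sSup (ratios a c) ^ 2 ≤ -(2 * m) := by
    refine sq_csSup_le_of_forall_sq_le ⟨0, zero_mem_ratios⟩
      (fun _ => nonneg_of_mem_ratios ha₀) fun q hq => ?_
    obtain ⟨ψ, hψ⟩ := exists_dualObjective_eq_of_mem_ratios ha hc hq
    have hmψ := hm (mem_range_self ψ)
    rw [hψ] at hmψ
    linarith
  linarith

end

theorem stmt12_general {X : Type*} [NormedAddCommGroup X] [InnerProductSpace ℝ X]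
    (Ghalf : X →L[ℝ] X)
    (v : X) (α : ℝ)
    (J : X → ℝ)
    (hJ : ∀ ψ : X, J ψ = (1 / 2) * ‖Ghalf ψ‖ ^ 2 - ⟪ψ, v⟫ + α * ‖ψ‖)
    (Sμ : Set ℝ)
    (hSμ : Sμ = {q : ℝ | q = 0 ∨ ∃ ψ : X, Ghalf ψ ≠ 0 ∧ 0 < ⟪ψ, v⟫ - α * ‖ψ‖ ∧
      q = (⟪ψ, v⟫ - α * ‖ψ‖) / ‖Ghalf ψ‖}) :
    (BddBelow (Set.range J) ↔
      ((¬ ∃ ψ : X, Ghalf ψ = 0 ∧ 0 < ⟪ψ, v⟫ - α * ‖ψ‖) ∧ BddAbove Sμ)) ∧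
    (BddBelow (Set.range J) → - sInf (Set.range J) = (1 / 2) * (sSup Sμ) ^ 2) := by
  set a : X → ℝ := fun ψ => ‖Ghalf ψ‖
  set c : X → ℝ := fun ψ => ⟪ψ, v⟫ - α * ‖ψ‖
  have ha : PosHomogeneous a := fun t ht ψ => by
    simp only [a, map_smul, norm_smul, Real.norm_of_nonneg ht]
  have hc : PosHomogeneous c := fun t ht ψ => by
    simp only [c, real_inner_smul_left, norm_smul, Real.norm_of_nonneg ht]
    ring
  have hJ' : J = dualObjective a c := funext fun ψ => by rw [hJ, dualObjective]; ring
  have hSμ' : Sμ = ratios a c := by simp only [hSμ, ratios, a, c, ne_eq, norm_eq_zero]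
  have hbad : (∃ ψ, Ghalf ψ = 0 ∧ 0 < c ψ) ↔ ∃ ψ, a ψ = 0 ∧ 0 < c ψ := by
    simp only [a, norm_eq_zero]
  rw [hJ', hSμ', hbad]
  refine ⟨bddBelow_dualObjective_iff (fun _ => norm_nonneg _) ha hc, fun hbdd => ?_⟩
  rw [(isGLB_dualObjective (fun _ => norm_nonneg _) ha hc hbdd).csInf_eq (range_nonempty _),
    neg_neg]

theorem stmt12 {X : Type*} [NormedAddCommGroup X] [InnerProductSpace ℝ X] [CompleteSpace X]
    (G Ghalf : X →L[ℝ] X)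
    (hGsa : ∀ x y : X, ⟪G x, y⟫ = ⟪x, G y⟫)
    (hGpos : ∀ x : X, 0 ≤ ⟪G x, x⟫)
    (hGhalf : ∀ ψ : X, ⟪G ψ, ψ⟫ = ‖Ghalf ψ‖ ^ 2)
    (v : X) (α : ℝ) (hα : 0 < α)
    (J : X → ℝ)
    (hJ : ∀ ψ : X, J ψ = (1 / 2) * ‖Ghalf ψ‖ ^ 2 - ⟪ψ, v⟫ + α * ‖ψ‖)
    (Sμ : Set ℝ)
    (hSμ : Sμ = {q : ℝ | q = 0 ∨ ∃ ψ : X, Ghalf ψ ≠ 0 ∧ 0 < ⟪ψ, v⟫ - α * ‖ψ‖ ∧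
      q = (⟪ψ, v⟫ - α * ‖ψ‖) / ‖Ghalf ψ‖}) :
    (BddBelow (Set.range J) ↔
      ((¬ ∃ ψ : X, Ghalf ψ = 0 ∧ 0 < ⟪ψ, v⟫ - α * ‖ψ‖) ∧ BddAbove Sμ)) ∧
    (BddBelow (Set.range J) → - sInf (Set.range J) = (1 / 2) * (sSup Sμ) ^ 2) :=
  stmt12_general Ghalf v α J hJ Sμ hSμ
end

section
/- Let (S(t))_{t≥0} be a C₀-group of bounded operators on a Hilbert space X (i.e., S(t) is invertible for each t with S(t)^{-1} = S(−t)), with ‖S(t)‖ ≤ M e^{ω|t|} for all t ∈ ℝ, where M ≥ 1, ω ≥ 0. Fix T > 0, a bounded operator B : U → X, and suppose there exist C > 0 and α ∈ (0,1) with α M e^{ωT} < 1 such that ‖S(T)*ψ‖ ≤ C‖B*S(T−·)*ψ‖_{L²(0,T;U)} + α‖ψ‖ for all ψ ∈ X. Then the exact observability inequality holds: ‖ψ‖ ≤ C' ‖B*S(T−·)*ψ‖_{L²(0,T;U)} for all ψ ∈ X, with C' = C M e^{ωT}/(1 − α M e^{ωT}). -/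
/-!
Since `S(-T)* S(T)* = (S(T) S(-T))* = id`, we get `‖ψ‖ ≤ ‖S(-T)‖ ‖S(T)* ψ‖ ≤ M e^{ωT} ‖S(T)* ψ‖`.
Inserting the approximate observability inequality, the term `α M e^{ωT} ‖ψ‖` on the right is
absorbed into the left-hand side because `α M e^{ωT} < 1`.
-/

open ContinuousLinearMap

theorem le_div_one_sub_of_le_add_mul {a b θ : ℝ} (h : a ≤ b + θ * a) (hθ : θ < 1) :
    a ≤ b / (1 - θ) := by
  rw [le_div_iff₀ (sub_pos.mpr hθ)]
  linarith

theorem norm_le_opNorm_mul_norm_adjoint_apply {𝕜 E F : Type*} [RCLike 𝕜]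
    [NormedAddCommGroup E] [InnerProductSpace 𝕜 E] [CompleteSpace E]
    [NormedAddCommGroup F] [InnerProductSpace 𝕜 F] [CompleteSpace F]
    {A : E →L[𝕜] F} {B : F →L[𝕜] E} (h : A ∘L B = .id 𝕜 F) (x : F) :
    ‖x‖ ≤ ‖B‖ * ‖adjoint A x‖ := by
  have hinv : adjoint B (adjoint A x) = x := by
    rw [← comp_apply, ← adjoint_comp, h, adjoint_id, id_apply]
  calc ‖x‖ = ‖adjoint B (adjoint A x)‖ := by rw [hinv]
    _ ≤ ‖adjoint B‖ * ‖adjoint A x‖ := le_opNorm _ _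
    _ = ‖B‖ * ‖adjoint A x‖ := by rw [LinearIsometryEquiv.norm_map]

theorem comp_neg_eq_id_of_map_add {𝕜 E : Type*} [RCLike 𝕜] [NormedAddCommGroup E]
    [NormedSpace 𝕜 E] {S : ℝ → E →L[𝕜] E} (hS0 : S 0 = 1)
    (hgroup : ∀ s t : ℝ, S (s + t) = (S s).comp (S t)) (t : ℝ) :
    S t ∘L S (-t) = .id 𝕜 E := by
  rw [← hgroup, add_neg_cancel, hS0, one_def]

theorem stmt17_general {X U : Type*} [NormedAddCommGroup X] [InnerProductSpace ℝ X] [CompleteSpace X]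
    [NormedAddCommGroup U] [InnerProductSpace ℝ U] [CompleteSpace U]
    (S : ℝ → X →L[ℝ] X) (hS0 : S 0 = 1)
    (hgroup : ∀ s t : ℝ, S (s + t) = (S s).comp (S t))
    (M ω : ℝ)
    (hbound : ∀ t : ℝ, ‖S t‖ ≤ M * Real.exp (ω * |t|))
    (T : ℝ) (hT : 0 < T) (B : U →L[ℝ] X) (C α : ℝ)
    (hsmall : α * M * Real.exp (ω * T) < 1)
    (hobs : ∀ ψ : X, ‖(S T).adjoint ψ‖ ≤
      C * Real.sqrt (∫ t in (0:ℝ)..T, ‖B.adjoint ((S (T - t)).adjoint ψ)‖ ^ 2) + α * ‖ψ‖) :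
    ∀ ψ : X, ‖ψ‖ ≤ (C * M * Real.exp (ω * T) / (1 - α * M * Real.exp (ω * T))) *
      Real.sqrt (∫ t in (0:ℝ)..T, ‖B.adjoint ((S (T - t)).adjoint ψ)‖ ^ 2) := by
  intro ψ
  set K := M * Real.exp (ω * T)
  set r := Real.sqrt (∫ t in (0:ℝ)..T, ‖B.adjoint ((S (T - t)).adjoint ψ)‖ ^ 2)
  have hSneg : ‖S (-T)‖ ≤ K := by simpa [abs_of_pos hT] using hbound (-T)
  have hK : 0 ≤ K := (norm_nonneg _).trans hSneg
  have hinv : ‖ψ‖ ≤ K * ‖(S T).adjoint ψ‖ :=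
    (norm_le_opNorm_mul_norm_adjoint_apply (comp_neg_eq_id_of_map_add hS0 hgroup T) ψ).trans
      (mul_le_mul_of_nonneg_right hSneg (norm_nonneg _))
  have habsorb : ‖ψ‖ ≤ K * C * r + α * K * ‖ψ‖ :=
    hinv.trans ((mul_le_mul_of_nonneg_left (hobs ψ) hK).trans_eq (by ring))
  have hsmall' : α * K < 1 := by simpa only [K, mul_assoc] using hsmall
  calc ‖ψ‖ ≤ K * C * r / (1 - α * K) := le_div_one_sub_of_le_add_mul habsorb hsmall'
    _ = C * M * Real.exp (ω * T) / (1 - α * M * Real.exp (ω * T)) * r := by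
      simp only [K]; ring

theorem stmt17 {X U : Type*} [NormedAddCommGroup X] [InnerProductSpace ℝ X] [CompleteSpace X]
    [NormedAddCommGroup U] [InnerProductSpace ℝ U] [CompleteSpace U]
    (S : ℝ → X →L[ℝ] X) (hS0 : S 0 = 1)
    (hgroup : ∀ s t : ℝ, S (s + t) = (S s).comp (S t))
    (M ω : ℝ) (hM : 1 ≤ M) (hω : 0 ≤ ω)
    (hbound : ∀ t : ℝ, ‖S t‖ ≤ M * Real.exp (ω * |t|))
    (T : ℝ) (hT : 0 < T) (B : U →L[ℝ] X) (C α : ℝ) (hC : 0 < C)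
    (hα0 : 0 < α) (hα1 : α < 1) (hsmall : α * M * Real.exp (ω * T) < 1)
    (hobs : ∀ ψ : X, ‖(S T).adjoint ψ‖ ≤
      C * Real.sqrt (∫ t in (0:ℝ)..T, ‖B.adjoint ((S (T - t)).adjoint ψ)‖ ^ 2) + α * ‖ψ‖) :
    ∀ ψ : X, ‖ψ‖ ≤ (C * M * Real.exp (ω * T) / (1 - α * M * Real.exp (ω * T))) *
      Real.sqrt (∫ t in (0:ℝ)..T, ‖B.adjoint ((S (T - t)).adjoint ψ)‖ ^ 2) :=
  stmt17_general S hS0 hgroup M ω hbound T hT B C α hsmall hobs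
end
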